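/- Let ρ > 0, λ > 0, U ∈ ℝ and K ∈ ℕ, let g be the 1D Maxwellian distribution with these parameters, and let ψ₁(u,ξ) = 1, ψ₂(u,ξ) = u, ψ₃(u,ξ) = (1/2)(u² + ‖ξ‖²). Given any coefficients a₁, a₂, a₃ ∈ ℝ, define a(u,ξ) = a₁ + a₂ u + a₃ (1/2)(u² + ‖ξ‖²). Then there exist unique coefficients A₁, A₂, A₃ ∈ ℝ such that, with A(u,ξ) = A₁ + A₂ u + A₃ (1/2)(u² + ‖ξ‖²), the compatibility conditions ∫_{ℝ × ℝ^K} (a(u,ξ) u + A(u,ξ)) ψ_α(u,ξ) g(u,ξ) du dξ = 0 hold for α = 1, 2, 3. -/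

import Mathlib

/-!
Writing `A = ∑ Aᵢ ψᵢ`, the compatibility conditions are the linear system `G A = -c` for the Gram
matrix `G_αi = ∫ ψᵢ ψ_α g` of the collision invariants in `L²(g)`. As `g > 0`,
`D ⬝ G D = ∫ (∑ Dᵢ ψᵢ)² g` vanishes only if the continuous function `∑ Dᵢ ψᵢ` vanishes almost
everywhere, hence everywhere, which forces `D = 0`; so `G` is invertible. All integrals are
finite because polynomials in `u` and `‖ξ‖²` are integrable against a Gaussian.
-/

open MeasureTheory Real Matrix
open scoped Nat

section WeightedGram

variable {X ι : Type*} [Fintype ι] {ψ : ι → X → ℝ} {w f : X → ℝ}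

lemma sum_mul_mul_weight_eq (A : ι → ℝ) (α : ι) (x : X) :
    (∑ i, A i * ψ i x) * ψ α x * w x = ∑ i, A i * (ψ i x * ψ α x * w x) := by
  simp only [Finset.sum_mul, mul_assoc]

lemma sq_sum_mul_weight_eq (D : ι → ℝ) (x : X) :
    (∑ i, D i * ψ i x) ^ 2 * w x = ∑ α, D α * ((∑ i, D i * ψ i x) * ψ α x * w x) := by
  calc (∑ i, D i * ψ i x) ^ 2 * w x = ∑ α, (∑ i, D i * ψ i x) * (D α * ψ α x) * w x := by
        rw [← Finset.sum_mul, ← Finset.mul_sum, sq]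
    _ = _ := Finset.sum_congr rfl fun α _ => by ring

variable [MeasurableSpace X] {μ : Measure X}

noncomputable def weightedGram (μ : Measure X) (ψ : ι → X → ℝ) (w : X → ℝ) : Matrix ι ι ℝ :=
  Matrix.of fun α i => ∫ x, ψ i x * ψ α x * w x ∂μ

lemma integrable_sum_mul_mul_weight
    (hψ : ∀ i j, Integrable (fun x => ψ i x * ψ j x * w x) μ) (A : ι → ℝ) (α : ι) :
    Integrable (fun x => (∑ i, A i * ψ i x) * ψ α x * w x) μ := by
  simp only [sum_mul_mul_weight_eq]
  exact integrable_finsetSum _ fun i _ => (hψ i α).const_mul (A i)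

lemma integral_sum_mul_mul_weight
    (hψ : ∀ i j, Integrable (fun x => ψ i x * ψ j x * w x) μ) (A : ι → ℝ) (α : ι) :
    ∫ x, (∑ i, A i * ψ i x) * ψ α x * w x ∂μ = (weightedGram μ ψ w *ᵥ A) α := by
  simp only [sum_mul_mul_weight_eq]
  rw [integral_finsetSum _ fun i _ => (hψ i α).const_mul (A i)]
  simp only [integral_const_mul, mulVec, dotProduct, weightedGram, of_apply]
  exact Finset.sum_congr rfl fun i _ => mul_comm _ _

lemma integrable_sq_sum_mul_weight
    (hψ : ∀ i j, Integrable (fun x => ψ i x * ψ j x * w x) μ) (D : ι → ℝ) :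
    Integrable (fun x => (∑ i, D i * ψ i x) ^ 2 * w x) μ := by
  simp only [sq_sum_mul_weight_eq]
  exact integrable_finsetSum _ fun α _ => (integrable_sum_mul_mul_weight hψ D α).const_mul (D α)

lemma integral_sq_sum_mul_weight
    (hψ : ∀ i j, Integrable (fun x => ψ i x * ψ j x * w x) μ) (D : ι → ℝ) :
    ∫ x, (∑ i, D i * ψ i x) ^ 2 * w x ∂μ = D ⬝ᵥ (weightedGram μ ψ w *ᵥ D) := by
  simp only [sq_sum_mul_weight_eq]
  rw [integral_finsetSum _ fun α _ => (integrable_sum_mul_mul_weight hψ D α).const_mul (D α)]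
  simp only [integral_const_mul, integral_sum_mul_mul_weight hψ, dotProduct]

lemma weightedGram_mulVec_injective
    (hψ : ∀ i j, Integrable (fun x => ψ i x * ψ j x * w x) μ) (hw : ∀ᵐ x ∂μ, 0 < w x)
    (hind : ∀ D : ι → ℝ, (∀ᵐ x ∂μ, ∑ i, D i * ψ i x = 0) → D = 0) :
    Function.Injective (weightedGram μ ψ w *ᵥ ·) := by
  suffices h : ∀ D, weightedGram μ ψ w *ᵥ D = 0 → D = 0 from
    fun D E hDE => sub_eq_zero.mp (h _ (by rw [mulVec_sub]; exact sub_eq_zero.mpr hDE))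
  intro D hD
  have hnonneg : 0 ≤ᵐ[μ] fun x => (∑ i, D i * ψ i x) ^ 2 * w x := by
    filter_upwards [hw] with x hx using mul_nonneg (sq_nonneg _) hx.le
  have hzero : ∫ x, (∑ i, D i * ψ i x) ^ 2 * w x ∂μ = 0 := by
    rw [integral_sq_sum_mul_weight hψ, hD, dotProduct_zero]
  refine hind D ?_
  filter_upwards [(integral_eq_zero_iff_of_nonneg_ae hnonneg
    (integrable_sq_sum_mul_weight hψ D)).mp hzero, hw] with x hx hwx
  simpa [hwx.ne'] using hx

theorem existsUnique_add_sum_orthogonal_weighted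
    (hψ : ∀ i j, Integrable (fun x => ψ i x * ψ j x * w x) μ) (hw : ∀ᵐ x ∂μ, 0 < w x)
    (hind : ∀ D : ι → ℝ, (∀ᵐ x ∂μ, ∑ i, D i * ψ i x = 0) → D = 0)
    (hf : ∀ α, Integrable (fun x => f x * ψ α x * w x) μ) :
    ∃! A : ι → ℝ, ∀ α, ∫ x, (f x + ∑ i, A i * ψ i x) * ψ α x * w x ∂μ = 0 := by
  classical
  set c : ι → ℝ := fun α => ∫ x, f x * ψ α x * w x ∂μ
  have hinj := weightedGram_mulVec_injective hψ hw hind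
  have hiff : ∀ A, (∀ α, ∫ x, (f x + ∑ i, A i * ψ i x) * ψ α x * w x ∂μ = 0) ↔
      weightedGram μ ψ w *ᵥ A = -c := fun A => by
    simp only [funext_iff, add_mul]
    refine forall_congr' fun α => ?_
    rw [integral_add (hf α) (integrable_sum_mul_mul_weight hψ A α),
      integral_sum_mul_mul_weight hψ, Pi.neg_apply, eq_neg_iff_add_eq_zero, add_comm]
  obtain ⟨A, hA⟩ := mulVec_surjective_iff_isUnit.mpr (mulVec_injective_iff_isUnit.mp hinj) (-c)
  exact ⟨A, (hiff A).2 hA, fun B hB => hinj (((hiff B).1 hB).trans hA.symm)⟩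

end WeightedGram

lemma norm_pow_mul_exp_neg_mul_sq_norm_sub_le {E : Type*} [SeminormedAddCommGroup E] {b : ℝ}
    (hb : 0 < b) (c v : E) (n : ℕ) :
    ‖v‖ ^ n * exp (-b * ‖v - c‖ ^ 2) ≤
      n ! * exp (‖c‖ + 1 / (2 * b)) * exp (-(b / 2) * ‖v - c‖ ^ 2) := by
  have hpow : ‖v‖ ^ n ≤ n ! * exp ‖v‖ := by
    have := pow_div_factorial_le_exp _ (norm_nonneg v) n
    rwa [div_le_iff₀ (by positivity), mul_comm] at this
  -- completing the square: `b/2 s² - s + 1/(2b) = b/2 (s - 1/b)²` for `s = ‖v - c‖`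
  have hexp : ‖v‖ - b * ‖v - c‖ ^ 2 ≤ ‖c‖ + 1 / (2 * b) - b / 2 * ‖v - c‖ ^ 2 := by
    have htri : ‖v‖ ≤ ‖v - c‖ + ‖c‖ := norm_le_norm_sub_add v c
    have hsq : 0 ≤ b / 2 * (‖v - c‖ - 1 / b) ^ 2 := by positivity
    have : b / 2 * (‖v - c‖ - 1 / b) ^ 2 = b / 2 * ‖v - c‖ ^ 2 - ‖v - c‖ + 1 / (2 * b) := by
      field_simp; ring
    linarith
  calc ‖v‖ ^ n * exp (-b * ‖v - c‖ ^ 2)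
      ≤ n ! * exp ‖v‖ * exp (-b * ‖v - c‖ ^ 2) := by gcongr
    _ = n ! * exp (‖v‖ - b * ‖v - c‖ ^ 2) := by
      rw [mul_assoc, ← exp_add, neg_mul, ← sub_eq_add_neg]
    _ ≤ n ! * exp (‖c‖ + 1 / (2 * b) - b / 2 * ‖v - c‖ ^ 2) := by gcongr
    _ = _ := by rw [mul_assoc, ← exp_add, neg_mul, ← sub_eq_add_neg]

-- The variables `X 0` and `X 1` stand for `u` and `‖ξ‖²`.
open MvPolynomial in
noncomputable def collisionInvariantPoly : Fin 3 → MvPolynomial (Fin 2) ℝ :=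
  ![1, X 0, C (1 / 2) * (X 0 ^ 2 + X 1)]

lemma sum_mul_eval_collisionInvariantPoly (D : Fin 3 → ℝ) (x : Fin 2 → ℝ) :
    ∑ i, D i * MvPolynomial.eval x (collisionInvariantPoly i) =
      D 0 + D 1 * x 0 + D 2 * ((1 / 2) * (x 0 ^ 2 + x 1)) := by
  simp [Fin.sum_univ_three, collisionInvariantPoly]

section VelocitySpace

variable {V : Type*} [NormedAddCommGroup V] [InnerProductSpace ℝ V] [FiniteDimensional ℝ V]
  [MeasurableSpace V] [BorelSpace V] {b : ℝ}

lemma integrable_exp_neg_mul_sq_norm (hb : 0 < b) :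
    Integrable (fun v : V => exp (-b * ‖v‖ ^ 2)) := by
  refine (GaussianFourier.integrable_cexp_neg_mul_sq_norm_add (V := V) (b := b)
    (by simpa using hb) 0 0).norm.congr (ae_of_all _ fun v => ?_)
  simp [Complex.norm_exp, ← Complex.ofReal_pow]

lemma integrable_norm_pow_mul_exp_neg_mul_sq_norm_sub (hb : 0 < b) (c : V) (n : ℕ) :
    Integrable (fun v : V => ‖v‖ ^ n * exp (-b * ‖v - c‖ ^ 2)) := by
  refine ((integrable_exp_neg_mul_sq_norm (V := V) (half_pos hb)).comp_sub_right c
    |>.const_mul (n ! * exp (‖c‖ + 1 / (2 * b)))).mono' (by fun_prop) (ae_of_all _ fun v => ?_)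
  rw [Real.norm_of_nonneg (by positivity)]
  exact norm_pow_mul_exp_neg_mul_sq_norm_sub_le hb c v n

lemma integrable_pow_mul_exp_neg_mul_sq_sub (hb : 0 < b) (U : ℝ) (n : ℕ) :
    Integrable (fun u : ℝ => u ^ n * exp (-b * (u - U) ^ 2)) := by
  refine (integrable_norm_pow_mul_exp_neg_mul_sq_norm_sub hb U n).mono (by fun_prop)
    (ae_of_all _ fun u => ?_)
  simp [sq_abs]

lemma integrable_pow_mul_sq_norm_pow_mul_gaussian (hb : 0 < b) (U : ℝ) (n m : ℕ) :
    Integrable (fun p : ℝ × V =>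
      p.1 ^ n * (‖p.2‖ ^ 2) ^ m * exp (-b * ((p.1 - U) ^ 2 + ‖p.2‖ ^ 2))) := by
  have hV := integrable_norm_pow_mul_exp_neg_mul_sq_norm_sub hb (0 : V) (2 * m)
  simp only [sub_zero] at hV
  refine ((integrable_pow_mul_exp_neg_mul_sq_sub hb U n).mul_prod hV).congr
    (ae_of_all _ fun p => ?_)
  simp only [pow_mul, mul_add, exp_add]
  ring

open MvPolynomial in
lemma integrable_eval_mul_gaussian (hb : 0 < b) (U : ℝ) (P : MvPolynomial (Fin 2) ℝ) :
    Integrable (fun p : ℝ × V =>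
      eval ![p.1, ‖p.2‖ ^ 2] P * exp (-b * ((p.1 - U) ^ 2 + ‖p.2‖ ^ 2))) := by
  simp only [eval_eq', Fin.prod_univ_two, Finset.sum_mul]
  refine integrable_finsetSum _ fun d _ =>
    ((integrable_pow_mul_sq_norm_pow_mul_gaussian hb U (d 0) (d 1)).const_mul (P.coeff d)).congr
      (ae_of_all _ fun p => ?_)
  simp only [Matrix.cons_val_zero, Matrix.cons_val_one]
  ring

lemma eq_zero_of_ae_sum_mul_collisionInvariant_eq_zero (D : Fin 3 → ℝ)
    (h : ∀ᵐ p : ℝ × V,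
      ∑ i, D i * MvPolynomial.eval ![p.1, ‖p.2‖ ^ 2] (collisionInvariantPoly i) = 0) :
    D = 0 := by
  simp only [sum_mul_eval_collisionInvariantPoly, Matrix.cons_val_zero, Matrix.cons_val_one] at h
  have hzero := (Continuous.ae_eq_iff_eq volume (by fun_prop) continuous_const).mp h
  have h0 := congrFun hzero (0, 0)
  have h1 := congrFun hzero (1, 0)
  have h2 := congrFun hzero (-1, 0)
  norm_num at h0 h1 h2
  have hD1 : D 1 = 0 := by linarith
  have hD2 : D 2 = 0 := by linarith
  ext i
  fin_cases i <;> assumption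

end VelocitySpace

theorem maxwellian_compatibility_unique_solution
    (ρ lam U : ℝ) (K : ℕ) (hρ : 0 < ρ) (hlam : 0 < lam)
    (g : ℝ × EuclideanSpace ℝ (Fin K) → ℝ)
    (hg : ∀ (u : ℝ) (ξ : EuclideanSpace ℝ (Fin K)),
      g (u, ξ) = ρ * (lam / π) ^ (((K : ℝ) + 1) / 2) *
        Real.exp (-lam * ((u - U) ^ 2 + ‖ξ‖ ^ 2)))
    (ψ : Fin 3 → ℝ × EuclideanSpace ℝ (Fin K) → ℝ)
    (hψ0 : ∀ p, ψ 0 p = 1)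
    (hψ1 : ∀ p, ψ 1 p = p.1)
    (hψ2 : ∀ p, ψ 2 p = (1 / 2) * (p.1 ^ 2 + ‖p.2‖ ^ 2))
    (a₁ a₂ a₃ : ℝ)
    (a : ℝ × EuclideanSpace ℝ (Fin K) → ℝ)
    (ha : ∀ p, a p = a₁ + a₂ * p.1 + a₃ * ((1 / 2) * (p.1 ^ 2 + ‖p.2‖ ^ 2))) :
    ∃! A : Fin 3 → ℝ, ∀ α : Fin 3,
      ∫ p : ℝ × EuclideanSpace ℝ (Fin K),
        (a p * p.1 + (A 0 + A 1 * p.1 + A 2 * ((1 / 2) * (p.1 ^ 2 + ‖p.2‖ ^ 2)))) *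
          ψ α p * g p = 0 := by
  have hg' : ∀ p, g p = ρ * (lam / π) ^ (((K : ℝ) + 1) / 2) *
      exp (-lam * ((p.1 - U) ^ 2 + ‖p.2‖ ^ 2)) := fun p => hg p.1 p.2
  set Ψ := collisionInvariantPoly
  have hψΨ : ∀ i p, ψ i p = MvPolynomial.eval ![p.1, ‖p.2‖ ^ 2] (Ψ i) := by
    intro i p
    fin_cases i <;> simp [Ψ, collisionInvariantPoly, hψ0, hψ1, hψ2]
  have hpoly : ∀ P, Integrable (fun p => MvPolynomial.eval ![p.1, ‖p.2‖ ^ 2] P * g p) :=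
    fun P => ((integrable_eval_mul_gaussian hlam U P).const_mul
      (ρ * (lam / π) ^ (((K : ℝ) + 1) / 2))).congr
      (ae_of_all _ fun p => by simp only [hg']; ring)
  have key := existsUnique_add_sum_orthogonal_weighted (ψ := ψ) (w := g) (f := fun p => a p * p.1)
    (fun i j => (hpoly (Ψ i * Ψ j)).congr (ae_of_all _ fun p => by simp [hψΨ]))
    (ae_of_all _ fun p => by rw [hg']; have := div_pos hlam pi_pos; positivity)
    (fun D hD => eq_zero_of_ae_sum_mul_collisionInvariant_eq_zero D (by simpa only [hψΨ] using hD))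
    (fun α => (hpoly ((MvPolynomial.C a₁ + MvPolynomial.C a₂ * MvPolynomial.X 0 +
      MvPolynomial.C a₃ * Ψ 2) * MvPolynomial.X 0 * Ψ α)).congr
      (ae_of_all _ fun p => by simp [hψΨ, ha, Ψ, collisionInvariantPoly]))
  simpa only [Fin.sum_univ_three, hψ0, hψ1, hψ2, mul_one] using key
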